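/- arXiv:1405.4363 — 2 statements merged into one kernel-verified Lean document; each statement's English description precedes it below -/
import Mathlib

section
/- Let x₁, …, x_n (n ≥ 1) be elements of an abelian group G forming a minimal zero-sum sequence, let X ⊆ G be a finite set, and let σ be a permutation of {1, …, n} such that for every i ∈ {1, …, n} the partial sum Σ_{l=1}^{i} x_{σ(l)} belongs to X. Then: (i) n ≤ |X|; (ii) if moreover n ≥ 3, x_{σ(2)} ≠ x_{σ(3)} and x_{σ(1)} + x_{σ(3)} ∈ X, then n ≤ |X| − 1. -/
/-!
Put `y = x ∘ σ` and `s i = y 0 + ⋯ + y i`. For `i < j` the difference `s j - s i` is the sum of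
`y` over `(i, j]`, a non-empty set of indices missing `i`, so minimality makes the `n` partial
sums pairwise distinct. For (ii), `y 0 + y 2` is a further element of `X`: it differs from `s 0`
because `y 2 ≠ 0`, from `s 1` because `y 1 ≠ y 2`, and from `s i` with `i ≥ 2` because their
difference is the sum of `y` over `[0, i] \ {0, 2}`, which contains `1` but not `0`.
-/

open Finset

def NoProperZeroSubsum {ι G : Type*} [Fintype ι] [AddCommMonoid G] (x : ι → G) : Prop :=
  ∀ I : Finset ι, I.Nonempty → I ≠ univ → ∑ i ∈ I, x i ≠ 0

namespace NoProperZeroSubsum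

variable {ι κ G : Type*} [Fintype ι] [Fintype κ] [AddCommMonoid G] {x : ι → G}

theorem sum_ne_zero (h : NoProperZeroSubsum x) {I : Finset ι} (hI : I.Nonempty) {j : ι}
    (hj : j ∉ I) : ∑ i ∈ I, x i ≠ 0 :=
  h I hI fun hU => hj (hU ▸ mem_univ j)

theorem comp_equiv (h : NoProperZeroSubsum x) (e : κ ≃ ι) : NoProperZeroSubsum (x ∘ e) := by
  intro I hI hU
  obtain ⟨j, hj⟩ : ∃ j, j ∉ I := by simpa [eq_univ_iff_forall] using hU
  simpa [sum_map] using h.sum_ne_zero (hI.map (f := e.toEmbedding)) (j := e j) (by simpa using hj)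

end NoProperZeroSubsum

section PartialSums

variable {ι G : Type*} [LinearOrder ι] [LocallyFiniteOrderBot ι] [AddCommGroup G] {y : ι → G}

theorem sum_Iic_add_sum_Ioc [LocallyFiniteOrder ι] {i j : ι} (hij : i ≤ j) :
    ∑ l ∈ Iic i, y l + ∑ l ∈ Ioc i j, y l = ∑ l ∈ Iic j, y l := by
  rw [← sum_union (Iic_disjoint_Ioc le_rfl), Iic_union_Ioc_eq_Iic hij]

theorem NoProperZeroSubsum.injective_sum_Iic [LocallyFiniteOrder ι] [Fintype ι]
    (h : NoProperZeroSubsum y) :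
    Function.Injective fun i => ∑ l ∈ Iic i, y l := by
  refine .of_lt_imp_ne fun i j hij heq => ?_
  have hIoc : ∑ l ∈ Ioc i j, y l = 0 := by
    simpa [heq] using (sum_Iic_add_sum_Ioc (y := y) hij.le)
  exact h.sum_ne_zero ⟨j, right_mem_Ioc.2 hij⟩ left_notMem_Ioc hIoc

theorem NoProperZeroSubsum.sum_Iic_ne_add [Fintype ι] (h : NoProperZeroSubsum y) {a b c : ι}
    (ha : IsMin a) (hab : a ⋖ b) (hbc : b ⋖ c) (hne : y b ≠ y c) (i : ι) :
    ∑ l ∈ Iic i, y l ≠ y a + y c := by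
  intro heq
  rcases lt_or_ge i c with hic | hci
  · rcases (hbc.le_of_lt hic).lt_or_eq with hib | rfl
    · obtain rfl : i = a := ha.eq_of_le (hab.le_of_lt hib)
      have hIic : Iic i = {i} := by
        ext l; simpa using ⟨ha.eq_of_le, le_of_eq⟩
      rw [hIic, sum_singleton, left_eq_add] at heq
      exact h.sum_ne_zero (singleton_nonempty c) (notMem_singleton.2 (hab.lt.trans hbc.lt).ne)
        (by rwa [sum_singleton])
    · have hIic : Iic i = {a, i} := by
        ext l
        simp only [mem_Iic, mem_insert, mem_singleton]
        exact ⟨fun hl => hl.lt_or_eq.imp_left fun hli => ha.eq_of_le (hab.le_of_lt hli),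
          by rintro (rfl | rfl) <;> [exact hab.le; exact le_rfl]⟩
      rw [hIic, sum_pair hab.ne, add_right_inj] at heq
      exact hne heq
  · have hsub : {a, c} ⊆ Iic i := by
      rw [insert_subset_iff, singleton_subset_iff, mem_Iic, mem_Iic]
      exact ⟨(hab.lt.trans hbc.lt).le.trans hci, hci⟩
    rw [← sum_sdiff hsub, sum_pair (hab.lt.trans hbc.lt).ne, add_eq_right] at heq
    refine h.sum_ne_zero ⟨b, ?_⟩ (j := a) (by simp) heq
    simp only [mem_sdiff, mem_Iic, mem_insert, mem_singleton, not_or]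
    exact ⟨hbc.lt.le.trans hci, hab.ne', hbc.ne⟩

end PartialSums

theorem counting_partial_sums (G : Type*) [AddCommGroup G] (n : ℕ)
    (x : Fin n → G)
    (hmin : ∀ I : Finset (Fin n), I.Nonempty → I ≠ Finset.univ → ∑ i ∈ I, x i ≠ 0)
    (X : Finset G) (σ : Equiv.Perm (Fin n))
    (hX : ∀ i : Fin n, (∑ l ∈ Finset.Iic i, x (σ l)) ∈ X) :
    n ≤ X.card ∧
    (∀ (hn3 : 3 ≤ n), x (σ ⟨1, by omega⟩) ≠ x (σ ⟨2, by omega⟩) →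
      x (σ ⟨0, by omega⟩) + x (σ ⟨2, by omega⟩) ∈ X → n ≤ X.card - 1) := by
  classical
  have hy : NoProperZeroSubsum (x ∘ σ) := NoProperZeroSubsum.comp_equiv hmin σ
  set sums := univ.image fun i => ∑ l ∈ Iic i, (x ∘ σ) l
  have hsums : sums ⊆ X := image_subset_iff.2 fun i _ => hX i
  have hcard : sums.card = n := by
    rw [card_image_of_injective _ hy.injective_sum_Iic, card_univ, Fintype.card_fin]
  refine ⟨hcard ▸ card_le_card hsums, fun hn3 h12 h02 => ?_⟩
  have hnew : x (σ ⟨0, by omega⟩) + x (σ ⟨2, by omega⟩) ∉ sums := by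
    simpa [sums] using hy.sum_Iic_ne_add (fun _ _ => Nat.zero_le _) (by simp) (by simp) h12
  have := card_le_card (insert_subset h02 hsums)
  rw [card_insert_of_notMem hnew, hcard] at this
  omega
end

section
/- Let x and y be integers with xy < 0 and set X = {x, y}, a = |y|/gcd(x, y), b = |x|/gcd(x, y). Then: (i) the unique minimal zero-sum sequence over X is the multiset consisting of x repeated a times and y repeated b times; (ii) the zero-sum sequences over X are exactly the multisets consisting of x repeated j·a times and y repeated j·b times for non-negative integers j (with j ≥ 1 for non-empty ones). -/
/-- A minimal zero-sum sequence over `X`: a non-empty multiset of elements of `X`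
whose sum is `0` and such that no non-empty proper sub-multiset has sum `0`. -/
def IsMinZeroSumSeq {G : Type*} [AddCommGroup G] (X : Set G) (s : Multiset G) : Prop :=
  s ≠ 0 ∧ (∀ x ∈ s, x ∈ X) ∧ s.sum = 0 ∧ ∀ t < s, t ≠ 0 → t.sum ≠ 0

/-- The Davenport constant of a subset `X` of an abelian group: the supremum of the
lengths of minimal zero-sum sequences over `X` (0 if there are none). -/
noncomputable def davenport {G : Type*} [AddCommGroup G] (X : Set G) : ℕ∞ :=
  ⨆ (s : Multiset G) (_ : IsMinZeroSumSeq X s), (Multiset.card s : ℕ∞)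

lemma arith (x y : ℤ) (hxy : x * y < 0) (m n : ℕ) :
    (m : ℤ) * x + n * y = 0 ↔
      ∃ j : ℕ, m = j * (y.natAbs / Int.gcd x y) ∧ n = j * (x.natAbs / Int.gcd x y) := by
  have hx : x ≠ 0 := by rintro rfl; simp at hxy
  have hy : y ≠ 0 := by rintro rfl; simp at hxy
  set d := Int.gcd x y with hd
  have hdnat : d = Nat.gcd x.natAbs y.natAbs := rfl
  have hdpos : 0 < d := Int.gcd_pos_of_ne_zero_left y hx
  have hdx : d ∣ x.natAbs := hdnat ▸ Nat.gcd_dvd_left _ _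
  have hdy : d ∣ y.natAbs := hdnat ▸ Nat.gcd_dvd_right _ _
  set A := y.natAbs / d with hA'
  set B := x.natAbs / d with hB'
  have hA : d * A = y.natAbs := Nat.mul_div_cancel' hdy
  have hB : d * B = x.natAbs := Nat.mul_div_cancel' hdx
  have hApos : 0 < A := Nat.div_pos (Nat.le_of_dvd (Int.natAbs_pos.mpr hy) hdy) hdpos
  have hcop : Nat.Coprime B A := by
    rw [hB', hA', hdnat]
    exact Nat.coprime_div_gcd_div_gcd (hdnat ▸ hdpos)
  have hsign : (y.natAbs : ℤ) * x + (x.natAbs : ℤ) * y = 0 := by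
    rcases mul_neg_iff.mp hxy with ⟨h1, h2⟩ | ⟨h1, h2⟩
    · rw [Int.natAbs_of_nonneg h1.le, Int.ofNat_natAbs_of_nonpos h2.le]; ring
    · rw [Int.ofNat_natAbs_of_nonpos h1.le, Int.natAbs_of_nonneg h2.le]; ring
  have hkey : (A : ℤ) * x + (B : ℤ) * y = 0 := by
    have h2 : (d : ℤ) * ((A : ℤ) * x + (B : ℤ) * y) = 0 := by
      calc (d : ℤ) * ((A : ℤ) * x + (B : ℤ) * y)
          = ((d * A : ℕ) : ℤ) * x + ((d * B : ℕ) : ℤ) * y := by push_cast; ring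
        _ = (y.natAbs : ℤ) * x + (x.natAbs : ℤ) * y := by rw [hA, hB]
        _ = 0 := hsign
    rcases mul_eq_zero.mp h2 with h | h
    · exact absurd h (by exact_mod_cast hdpos.ne')
    · exact h
  constructor
  · intro h
    have h1 : m * x.natAbs = n * y.natAbs := by
      have heq : (m : ℤ) * x = -((n : ℤ) * y) := by linarith
      have := congrArg Int.natAbs heq
      simpa [Int.natAbs_mul, Int.natAbs_neg] using this
    have h2 : m * B = n * A := by
      have : d * (m * B) = d * (n * A) := by
        rw [show d * (m * B) = m * (d * B) by ring, show d * (n * A) = n * (d * A) by ring,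
          hA, hB, h1]
      exact Nat.eq_of_mul_eq_mul_left hdpos this
    have hAm : A ∣ m := hcop.symm.dvd_of_dvd_mul_right ⟨n, by linarith [h2]⟩
    obtain ⟨j, rfl⟩ := hAm
    refine ⟨j, by ring, ?_⟩
    have : n * A = j * B * A := by rw [← h2]; ring
    exact (Nat.eq_of_mul_eq_mul_right hApos this)
  · rintro ⟨j, rfl, rfl⟩
    push_cast
    linear_combination (j : ℤ) * hkey

lemma decomp (x y : ℤ) (hne : x ≠ y) (s : Multiset ℤ) (h : ∀ z ∈ s, z = x ∨ z = y) :
    s = Multiset.replicate (s.count x) x + Multiset.replicate (s.count y) y := by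
  ext z
  rw [Multiset.count_add, Multiset.count_replicate, Multiset.count_replicate]
  by_cases hzx : z = x
  · subst hzx; rw [if_pos rfl, if_neg (Ne.symm hne)]; omega
  · by_cases hzy : z = y
    · subst hzy; rw [if_neg hne, if_pos rfl]; omega
    · have hns : z ∉ s := fun hz => by rcases h z hz with rfl | rfl <;> simp at hzx hzy
      rw [if_neg (fun h => hzx h.symm), if_neg (fun h => hzy h.symm),
        Multiset.count_eq_zero_of_notMem hns]

lemma count_rr (x y : ℤ) (hne : x ≠ y) (m n : ℕ) :
    (Multiset.replicate m x + Multiset.replicate n y).count x = m ∧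
    (Multiset.replicate m x + Multiset.replicate n y).count y = n := by
  constructor <;> simp [Multiset.count_replicate, hne, Ne.symm hne]

lemma sum_rr (x y : ℤ) (m n : ℕ) :
    (Multiset.replicate m x + Multiset.replicate n y).sum = (m : ℤ) * x + n * y := by
  simp [Multiset.sum_replicate, nsmul_eq_mul]

theorem zero_sum_over_pair (x y : ℤ) (hxy : x * y < 0) :
    (∀ s : Multiset ℤ,
      IsMinZeroSumSeq {x, y} s ↔
        s = Multiset.replicate (y.natAbs / Int.gcd x y) x +
            Multiset.replicate (x.natAbs / Int.gcd x y) y) ∧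
    (∀ s : Multiset ℤ,
      ((∀ z ∈ s, z ∈ ({x, y} : Set ℤ)) ∧ s.sum = 0) ↔
        ∃ j : ℕ, s = Multiset.replicate (j * (y.natAbs / Int.gcd x y)) x +
                     Multiset.replicate (j * (x.natAbs / Int.gcd x y)) y) := by
  have hx : x ≠ 0 := by rintro rfl; simp at hxy
  have hy : y ≠ 0 := by rintro rfl; simp at hxy
  have hne : x ≠ y := by rintro rfl; nlinarith
  have hdnat : Int.gcd x y = Nat.gcd x.natAbs y.natAbs := rfl
  have hdpos : 0 < Int.gcd x y := Int.gcd_pos_of_ne_zero_left y hx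
  set A := y.natAbs / Int.gcd x y with hA'
  set B := x.natAbs / Int.gcd x y with hB'
  have hApos : 0 < A :=
    Nat.div_pos (Nat.le_of_dvd (Int.natAbs_pos.mpr hy) (hdnat ▸ Nat.gcd_dvd_right _ _)) hdpos
  have hBpos : 0 < B :=
    Nat.div_pos (Nat.le_of_dvd (Int.natAbs_pos.mpr hx) (hdnat ▸ Nat.gcd_dvd_left _ _)) hdpos
  have part2 : ∀ s : Multiset ℤ,
      ((∀ z ∈ s, z ∈ ({x, y} : Set ℤ)) ∧ s.sum = 0) ↔
        ∃ j : ℕ, s = Multiset.replicate (j * A) x + Multiset.replicate (j * B) y := by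
    intro s
    constructor
    · rintro ⟨h1, h2⟩
      have hdec := decomp x y hne s (fun z hz => by simpa using h1 z hz)
      rw [hdec, sum_rr] at h2
      obtain ⟨j, hm, hn⟩ := (arith x y hxy _ _).mp h2
      exact ⟨j, by rw [hdec, hm, hn]⟩
    · rintro ⟨j, rfl⟩
      constructor
      · intro z hz
        simp only [Set.mem_insert_iff, Set.mem_singleton_iff]
        rcases Multiset.mem_add.mp hz with h | h
        · exact Or.inl (Multiset.eq_of_mem_replicate h)
        · exact Or.inr (Multiset.eq_of_mem_replicate h)
      · rw [sum_rr]
        exact (arith x y hxy _ _).mpr ⟨j, rfl, rfl⟩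
  refine ⟨?_, part2⟩
  intro s
  have hne0 : (Multiset.replicate A x + Multiset.replicate B y) ≠ 0 := by
    intro h0
    have hxmem : x ∈ Multiset.replicate A x + Multiset.replicate B y :=
      Multiset.mem_add.mpr (Or.inl (Multiset.mem_replicate.mpr ⟨hApos.ne', rfl⟩))
    rw [h0] at hxmem
    exact absurd hxmem (Multiset.notMem_zero x)
  constructor
  · rintro ⟨hs0, hmem, hsum, hminimal⟩
    obtain ⟨j, rfl⟩ := (part2 s).mp ⟨hmem, hsum⟩
    rcases Nat.lt_or_ge j 2 with h2 | h2
    · interval_cases j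
      · simp at hs0
      · simp
    · exfalso
      have hlt : Multiset.replicate A x + Multiset.replicate B y <
          Multiset.replicate (j * A) x + Multiset.replicate (j * B) y := by
        refine lt_of_le_of_ne ?_ ?_
        · exact add_le_add ((Multiset.replicate_le_replicate x).mpr (Nat.le_mul_of_pos_left A (by omega)))
            ((Multiset.replicate_le_replicate y).mpr (Nat.le_mul_of_pos_left B (by omega)))
        · intro heq
          have := congrArg (Multiset.count x) heq
          rw [(count_rr x y hne A B).1, (count_rr x y hne (j*A) (j*B)).1] at this
          nlinarith
      have hsum0 : (Multiset.replicate A x + Multiset.replicate B y).sum = 0 := by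
        rw [sum_rr]
        exact (arith x y hxy _ _).mpr ⟨1, (one_mul A).symm, (one_mul B).symm⟩
      exact hminimal _ hlt hne0 hsum0
  · rintro rfl
    have hmem2 := (part2 _).mpr ⟨1, by rw [one_mul, one_mul]⟩
    refine ⟨hne0, hmem2.1, hmem2.2, ?_⟩
    intro t hlt htne hts
    have hle := hlt.le
    have hmemt : ∀ z ∈ t, z ∈ ({x, y} : Set ℤ) :=
      fun z hz => hmem2.1 z (Multiset.mem_of_le hle hz)
    obtain ⟨j, hjt⟩ := (part2 t).mp ⟨hmemt, hts⟩
    have hcx : t.count x ≤ A := by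
      have := Multiset.count_le_of_le x hle
      rwa [(count_rr x y hne A B).1] at this
    have hjA : j * A ≤ A := by
      rw [hjt, (count_rr x y hne (j*A) (j*B)).1] at hcx; exact hcx
    have hj0 : j ≠ 0 := by
      rintro rfl
      simp at hjt
      exact htne hjt
    have hj1 : j = 1 := by
      have hle1 : j ≤ 1 := Nat.le_of_mul_le_mul_right (by simpa using hjA) hApos
      omega
    subst hj1
    rw [one_mul, one_mul] at hjt
    exact hlt.ne hjt
end
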